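/- Let u be a vertex of 𝒢 with exactly two incident edges (u,v) and (u,w), where (u,v) ∈ F and (u,w) ∉ F. Suppose y₀, z, Ω satisfy weak approximate complementary slackness: yz₀(e) ≥ μ(e)−2 for every e ∈ ℰ\F and yz₀(e) ≤ μ(e) for every e ∈ F. Define y(u) := μ(u,v) − y₀(v) − Σ_{(B,I(B))∈Ω : (u,v)∈γ(B)∪I(B)} z(B) and y(x) := y₀(x) for every other vertex x, and let yz be formed from y and z as yz₀ is from y₀ and z. Then y(u) ≥ y₀(u), yz(u,v) = μ(u,v), and yz(u,w) ≥ μ(u,w)−2. -/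

import Mathlib

open Finset
open scoped Classical

/-- An edge `e` belongs to `γ(B) ∪ I(B)` for a blossom-pair `p = (B, I(B))`:
either both endpoints of `e` lie in `B`, or `e ∈ I(B)`. -/
def inGamI {V : Type*} (p : Finset V × Finset (Sym2 V)) (e : Sym2 V) : Prop :=
  (∀ a ∈ e, a ∈ p.1) ∨ e ∈ p.2

/-- `yz(a,b) = y(a) + y(b) + Σ_{(B,I(B)) ∈ Ω : (a,b) ∈ γ(B) ∪ I(B)} z(B)`. -/
noncomputable def yzP {V : Type*} (y : V → ℤ)
    (Ω : Finset (Finset V × Finset (Sym2 V)))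
    (z : Finset V × Finset (Sym2 V) → ℤ) (a b : V) : ℤ :=
  y a + y b + ∑ p ∈ Ω.filter (fun p => inGamI p s(a, b)), z p

/-! Only `y(u)` changes, and it rises by exactly the slack `μ(u,v) − yz₀(u,v) ≥ 0` of the
matching edge `(u,v)`: this makes `(u,v)` tight and can only increase `yz(u,w)`. -/

theorem yzP_eq_add_of_eq_off {V : Type*} {y y₀ : V → ℤ} {u b : V} (hoff : ∀ x, x ≠ u → y x = y₀ x)
    (hb : b ≠ u) (Ω : Finset (Finset V × Finset (Sym2 V)))
    (z : Finset V × Finset (Sym2 V) → ℤ) :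
    yzP y Ω z u b = yzP y₀ Ω z u b + (y u - y₀ u) := by
  unfold yzP
  rw [hoff b hb]
  ring

theorem stmt_14_general {V : Type*} [DecidableEq V]
    (ℰ : Finset (Sym2 V))
    (μ : Sym2 V → ℤ) (F : Finset (Sym2 V))
    (y₀ : V → ℤ) (Ω : Finset (Finset V × Finset (Sym2 V)))
    (z : Finset V × Finset (Sym2 V) → ℤ)
    (u v w : V) (huv : u ≠ v) (huw : u ≠ w)
    (huvF : s(u, v) ∈ F)
    (huwE : s(u, w) ∈ ℰ) (huwF : s(u, w) ∉ F)
    (dominance : ∀ a b : V, s(a, b) ∈ ℰ → s(a, b) ∉ F →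
      yzP y₀ Ω z a b ≥ μ s(a, b) - 2)
    (tightness : ∀ a b : V, s(a, b) ∈ F → yzP y₀ Ω z a b ≤ μ s(a, b)) :
    ∀ y : V → ℤ,
      (∀ x : V, y x = if x = u then
          μ s(u, v) - y₀ v - ∑ p ∈ Ω.filter (fun p => inGamI p s(u, v)), z p
        else y₀ x) →
      y u ≥ y₀ u ∧ yzP y Ω z u v = μ s(u, v) ∧ yzP y Ω z u w ≥ μ s(u, w) - 2 := by
  intro y hy
  have hoff : ∀ x, x ≠ u → y x = y₀ x := fun x hx => by rw [hy x, if_neg hx]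
  have hgain : y u - y₀ u = μ s(u, v) - yzP y₀ Ω z u v := by
    rw [hy u, if_pos rfl]
    unfold yzP
    ring
  have hv := yzP_eq_add_of_eq_off hoff huv.symm Ω z
  have hw := yzP_eq_add_of_eq_off hoff huw.symm Ω z
  have htight := tightness u v huvF
  have hdom := dominance u w huwE huwF
  exact ⟨by linarith, by linarith, by linarith⟩

/-- the recover step.  Let `u` be a vertex with exactly two
incident edges `(u,v) ∈ F` and `(u,w) ∉ F`, and suppose `y₀, z, Ω` satisfy
weak approximate complementary slackness.  If `y` agrees with `y₀` everywhere
except `y(u) := μ(u,v) − y₀(v) − Σ_{(B,I(B)) ∈ Ω : (u,v) ∈ γ(B)∪I(B)} z(B)`,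
then `y(u) ≥ y₀(u)`, `yz(u,v) = μ(u,v)` and `yz(u,w) ≥ μ(u,w) − 2`. -/
theorem stmt_14 {V : Type*} [Fintype V] [DecidableEq V]
    (ℰ : Finset (Sym2 V)) (hEd : ∀ e ∈ ℰ, ¬ e.IsDiag)
    (μ : Sym2 V → ℤ) (F : Finset (Sym2 V)) (hFE : F ⊆ ℰ)
    (y₀ : V → ℤ) (Ω : Finset (Finset V × Finset (Sym2 V)))
    (hΩ : ∀ p ∈ Ω, ∀ e ∈ p.2, e ∈ ℰ ∧ (∃ a ∈ e, a ∈ p.1) ∧ ∃ a ∈ e, a ∉ p.1)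
    (z : Finset V × Finset (Sym2 V) → ℤ) (hz : ∀ p ∈ Ω, 0 ≤ z p)
    (u v w : V) (huv : u ≠ v) (huw : u ≠ w) (hvw : s(u, v) ≠ s(u, w))
    (h2 : ℰ.filter (fun e => u ∈ e) = {s(u, v), s(u, w)})
    (huvE : s(u, v) ∈ ℰ) (huvF : s(u, v) ∈ F)
    (huwE : s(u, w) ∈ ℰ) (huwF : s(u, w) ∉ F)
    (dominance : ∀ a b : V, s(a, b) ∈ ℰ → s(a, b) ∉ F →
      yzP y₀ Ω z a b ≥ μ s(a, b) - 2)
    (tightness : ∀ a b : V, s(a, b) ∈ F → yzP y₀ Ω z a b ≤ μ s(a, b)) :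
    ∀ y : V → ℤ,
      (∀ x : V, y x = if x = u then
          μ s(u, v) - y₀ v - ∑ p ∈ Ω.filter (fun p => inGamI p s(u, v)), z p
        else y₀ x) →
      y u ≥ y₀ u ∧ yzP y Ω z u v = μ s(u, v) ∧ yzP y Ω z u w ≥ μ s(u, w) - 2 :=
  stmt_14_general ℰ μ F y₀ Ω z u v w huv huw huvF huwE huwF dominance tightness
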